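/- arXiv:math-ph/0703086 — 2 statements merged into one kernel-verified Lean document; each statement's English description precedes it below -/
import Mathlib

section
/- For β > 0 and μ ∈ ℝ, the function K_{β,μ}(p) = (p²−μ)(e^{β(p²−μ)}+1)/(e^{β(p²−μ)}−1) (extended by continuity to 2/β when p² = μ) satisfies a(|p²−μ| + 2/β) ≤ K_{β,μ}(p) ≤ |p²−μ| + 2/β for all p ∈ ℝ³, where a = inf_{t>0} t(e^t+1)/((t+2)(e^t−1)) > 0. -/
/-!
With `f(t) = t coth (t/2) = t (eᵗ + 1)/(eᵗ - 1)` and `f(0) = 2` one has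
`K_{β,μ}(p) = f(β(p² - μ))/β`, so everything reduces to bounds on the even function `f`:
`f(t) ≤ t + 2` is `t + 1 ≤ eᵗ`, and `f(t) ≥ max(1, t) ≥ (t + 2)/3` for `t > 0` shows that
the infimum `a` of `f(t)/(t + 2)` is positive.
-/

open Real Set MeasureTheory

/-- The BCS symbol `K_{β,μ}(p)`, extended by continuity to `2/β` when `p² = μ`. -/
noncomputable def Kfun (β μ : ℝ) (p : EuclideanSpace ℝ (Fin 3)) : ℝ :=
  if ‖p‖ ^ 2 = μ then 2 / β
  else (‖p‖ ^ 2 - μ) * (Real.exp (β * (‖p‖ ^ 2 - μ)) + 1) /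
    (Real.exp (β * (‖p‖ ^ 2 - μ)) - 1)

/-- `a = inf_{t>0} t(e^t+1)/((t+2)(e^t-1))`. -/
noncomputable def aInf : ℝ :=
  sInf ((fun t : ℝ => t * (Real.exp t + 1) / ((t + 2) * (Real.exp t - 1))) '' Set.Ioi 0)

/-- `t coth (t/2)`. -/
noncomputable def mulCothHalf (t : ℝ) : ℝ :=
  if t = 0 then 2 else t * (exp t + 1) / (exp t - 1)

lemma mulCothHalf_of_ne_zero {t : ℝ} (ht : t ≠ 0) :
    mulCothHalf t = t * (exp t + 1) / (exp t - 1) :=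
  if_neg ht

lemma mulCothHalf_neg (t : ℝ) : mulCothHalf (-t) = mulCothHalf t := by
  rcases eq_or_ne t 0 with rfl | ht
  · rw [neg_zero]
  rw [mulCothHalf_of_ne_zero ht, mulCothHalf_of_ne_zero (neg_ne_zero.mpr ht), exp_neg]
  have hexp : exp t ≠ 1 := (exp_eq_one_iff t).not.mpr ht
  rw [div_eq_div_iff (sub_ne_zero.mpr (inv_ne_one.mpr hexp)) (sub_ne_zero.mpr hexp)]
  field_simp
  ring

lemma mulCothHalf_abs (t : ℝ) : mulCothHalf |t| = mulCothHalf t := by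
  rcases abs_choice t with h | h <;> rw [h]
  exact mulCothHalf_neg t

lemma exp_sub_one_pos {t : ℝ} (ht : 0 < t) : 0 < exp t - 1 :=
  sub_pos.mpr (one_lt_exp_iff.mpr ht)

lemma mulCothHalf_le_add_two {t : ℝ} (ht : 0 < t) : mulCothHalf t ≤ t + 2 := by
  rw [mulCothHalf_of_ne_zero ht.ne', div_le_iff₀ (exp_sub_one_pos ht)]
  nlinarith [add_one_le_exp t]

lemma self_le_mulCothHalf {t : ℝ} (ht : 0 < t) : t ≤ mulCothHalf t := by
  rw [mulCothHalf_of_ne_zero ht.ne', le_div_iff₀ (exp_sub_one_pos ht)]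
  linarith

-- `eᵗ - 1 ≤ t eᵗ` is `1 - t ≤ e⁻ᵗ`.
lemma one_le_mulCothHalf {t : ℝ} (ht : 0 < t) : 1 ≤ mulCothHalf t := by
  rw [mulCothHalf_of_ne_zero ht.ne', le_div_iff₀ (exp_sub_one_pos ht)]
  have hinv : exp t * exp (-t) = 1 := by rw [← exp_add, add_neg_cancel, exp_zero]
  nlinarith [mul_le_mul_of_nonneg_left (one_sub_le_exp_neg t) (exp_pos t).le]

lemma mulCothHalf_le_abs_add_two (t : ℝ) : mulCothHalf t ≤ |t| + 2 := by
  rcases eq_or_ne t 0 with rfl | ht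
  · simp [mulCothHalf]
  rw [← mulCothHalf_abs]
  exact mulCothHalf_le_add_two (abs_pos.mpr ht)

lemma aInf_eq : aInf = sInf ((fun t => mulCothHalf t / (t + 2)) '' Ioi 0) := by
  refine congrArg sInf (image_congr fun t ht => ?_)
  rw [mulCothHalf_of_ne_zero (ne_of_gt ht), div_div, mul_comm (exp t - 1)]

lemma third_le_mulCothHalf_div {t : ℝ} (ht : 0 < t) : 1 / 3 ≤ mulCothHalf t / (t + 2) := by
  rw [le_div_iff₀ (by linarith)]
  linarith [self_le_mulCothHalf ht, one_le_mulCothHalf ht]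

lemma third_le_aInf : 1 / 3 ≤ aInf := by
  rw [aInf_eq]
  refine le_csInf ⟨_, mem_image_of_mem _ (mem_Ioi.mpr one_pos)⟩ ?_
  rintro _ ⟨t, ht, rfl⟩
  exact third_le_mulCothHalf_div ht

lemma aInf_mul_le_mulCothHalf {t : ℝ} (ht : 0 < t) : aInf * (t + 2) ≤ mulCothHalf t := by
  have hbdd : BddBelow ((fun t => mulCothHalf t / (t + 2)) '' Ioi 0) := by
    refine ⟨1 / 3, ?_⟩
    rintro _ ⟨t, ht, rfl⟩
    exact third_le_mulCothHalf_div ht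
  rw [← le_div_iff₀ (by linarith), aInf_eq]
  exact csInf_le hbdd ⟨t, ht, rfl⟩

lemma aInf_le_one : aInf ≤ 1 := by
  have h1 := aInf_mul_le_mulCothHalf one_pos
  have h2 := mulCothHalf_le_add_two one_pos
  linarith

lemma aInf_mul_abs_add_two_le (t : ℝ) : aInf * (|t| + 2) ≤ mulCothHalf t := by
  rcases eq_or_ne t 0 with rfl | ht
  · simpa [mulCothHalf] using aInf_le_one
  rw [← mulCothHalf_abs]
  exact aInf_mul_le_mulCothHalf (abs_pos.mpr ht)

lemma Kfun_eq_mulCothHalf {β : ℝ} (μ : ℝ) (hβ : β ≠ 0) (p : EuclideanSpace ℝ (Fin 3)) :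
    Kfun β μ p = mulCothHalf (β * (‖p‖ ^ 2 - μ)) / β := by
  rw [Kfun, mulCothHalf]
  by_cases h : ‖p‖ ^ 2 = μ
  · simp [h]
  have hs : ‖p‖ ^ 2 - μ ≠ 0 := sub_ne_zero.mpr h
  rw [if_neg h, if_neg (mul_ne_zero hβ hs)]
  field_simp

theorem Kfun_bounds (β μ : ℝ) (hβ : 0 < β) :
    0 < aInf ∧
    ∀ p : EuclideanSpace ℝ (Fin 3),
      aInf * (|‖p‖ ^ 2 - μ| + 2 / β) ≤ Kfun β μ p ∧
      Kfun β μ p ≤ |‖p‖ ^ 2 - μ| + 2 / β := by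
  refine ⟨lt_of_lt_of_le (by norm_num) third_le_aInf, fun p => ?_⟩
  set s := ‖p‖ ^ 2 - μ
  have hscale : |β * s| + 2 = (|s| + 2 / β) * β := by
    rw [abs_mul, abs_of_pos hβ]
    field_simp
  rw [Kfun_eq_mulCothHalf μ hβ.ne' p, le_div_iff₀ hβ, div_le_iff₀ hβ, mul_assoc, ← hscale]
  exact ⟨aInf_mul_abs_add_two_le _, mulCothHalf_le_abs_add_two _⟩
end

section
/- (Strict positivity via negative Fourier transform) Let α ∈ L²(ℝ³) with Fourier transform α̂ ∈ L¹(ℝ³), and let V̂ : ℝ³ → ℝ be continuous with V̂(k) < 0 for all k. Then ∫∫ conj(α̂(p)) V̂(p−q) α̂(q) dp dq ≥ ∫∫ |α̂(p)| V̂(p−q) |α̂(q)| dp dq, with equality only if there is κ ∈ ℝ such that α̂(p) = e^{iκ}|α̂(p)| for a.e. p. -/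
/-!
Pointwise, `Re (conj x * y) ≤ ‖x‖ * ‖y‖`, and multiplying by the negative kernel value
`V̂ (p - q)` reverses this; integrating gives the inequality. If the two double integrals agree,
the pointwise inequality is an equality for almost every pair `(p, q)`, so `conj (α̂ p) * α̂ q ≥ 0`
a.e.; fixing one `p₀` with `α̂ p₀ ≠ 0`, almost every `α̂ q` then has the phase of `α̂ p₀`.
-/

open MeasureTheory

namespace Complex

lemma re_conj_mul_ofReal_mul (x y : ℂ) (k : ℝ) :
    (starRingEnd ℂ x * k * y).re = k * (starRingEnd ℂ x * y).re := by
  rw [mul_right_comm, mul_comm, re_ofReal_mul]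

lemma re_conj_mul_le_norm_mul (x y : ℂ) : (starRingEnd ℂ x * y).re ≤ ‖x‖ * ‖y‖ := by
  simpa using re_le_norm (starRingEnd ℂ x * y)

lemma norm_mul_mul_norm_le_re_conj_mul_mul {k : ℝ} (hk : k ≤ 0) (x y : ℂ) :
    ‖x‖ * k * ‖y‖ ≤ (starRingEnd ℂ x * k * y).re := by
  rw [re_conj_mul_ofReal_mul, mul_comm ‖x‖, mul_assoc]
  exact mul_le_mul_of_nonpos_left (re_conj_mul_le_norm_mul x y) hk

lemma eq_exp_arg_mul_norm_of_re_conj_mul_eq {x y : ℂ} (hx : x ≠ 0)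
    (h : (starRingEnd ℂ x * y).re = ‖x‖ * ‖y‖) :
    y = exp (arg x * I) * ‖y‖ := by
  have hxy : ‖y‖ • x = ‖x‖ • y := by
    rw [← inner_eq_norm_mul_iff_real, Complex.inner, mul_comm, h]
  have hnx : (‖x‖ : ℂ) ≠ 0 := by simpa using hx
  rw [← mul_left_inj' hnx, mul_right_comm, mul_comm (exp _), norm_mul_exp_arg_mul_I]
  simpa [Complex.real_smul, mul_comm] using hxy.symm

end Complex

section KernelQuadraticForm

open Complex

variable {α : Type*} [MeasurableSpace α] {μ : Measure α} {f : α → ℂ} {K : α → α → ℝ}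

lemma exists_phase_of_ae_ae_re_conj_mul_eq
    (h : ∀ᵐ x ∂μ, ∀ᵐ y ∂μ, (starRingEnd ℂ (f x) * f y).re = ‖f x‖ * ‖f y‖) :
    ∃ κ : ℝ, ∀ᵐ x ∂μ, f x = exp (κ * I) * ‖f x‖ := by
  by_cases hzero : ∀ᵐ x ∂μ, f x = 0
  · exact ⟨0, by filter_upwards [hzero] with x hx using by simp [hx]⟩
  · obtain ⟨x₀, hx₀, hy⟩ := ((Filter.not_eventually.mp hzero).and_eventually h).exists
    exact ⟨arg (f x₀), by
      filter_upwards [hy] with y hy using eq_exp_arg_mul_norm_of_re_conj_mul_eq hx₀ hy⟩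

lemma integrable_conj_mul_kernel_mul (hf : AEStronglyMeasurable f μ)
    (hK : AEStronglyMeasurable (Function.uncurry K) (μ.prod μ))
    (hint : Integrable (fun z : α × α => ‖f z.1‖ * |K z.1 z.2| * ‖f z.2‖) (μ.prod μ)) :
    Integrable (fun z : α × α => starRingEnd ℂ (f z.1) * K z.1 z.2 * f z.2) (μ.prod μ) := by
  refine hint.mono' ?_ (.of_forall fun z => by simp)
  exact ((continuous_conj.comp_aestronglyMeasurable hf.comp_fst).mul
    (continuous_ofReal.comp_aestronglyMeasurable hK)).mul hf.comp_snd

lemma integrable_norm_mul_kernel_mul (hf : AEStronglyMeasurable f μ)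
    (hK : AEStronglyMeasurable (Function.uncurry K) (μ.prod μ))
    (hint : Integrable (fun z : α × α => ‖f z.1‖ * |K z.1 z.2| * ‖f z.2‖) (μ.prod μ)) :
    Integrable (fun z : α × α => ‖f z.1‖ * K z.1 z.2 * ‖f z.2‖) (μ.prod μ) :=
  hint.mono' ((hf.comp_fst.norm.mul hK).mul hf.comp_snd.norm) (.of_forall fun z => by simp)

variable [SFinite μ]

lemma re_integral_integral_conj_mul_kernel_mul (hf : AEStronglyMeasurable f μ)
    (hK : AEStronglyMeasurable (Function.uncurry K) (μ.prod μ))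
    (hint : Integrable (fun z : α × α => ‖f z.1‖ * |K z.1 z.2| * ‖f z.2‖) (μ.prod μ)) :
    (∫ x, ∫ y, starRingEnd ℂ (f x) * K x y * f y ∂μ ∂μ).re =
      ∫ z, (starRingEnd ℂ (f z.1) * K z.1 z.2 * f z.2).re ∂μ.prod μ := by
  have hF := integrable_conj_mul_kernel_mul hf hK hint
  rw [integral_integral hF]
  exact (integral_re hF).symm

theorem integral_integral_norm_mul_kernel_mul_le (hf : AEStronglyMeasurable f μ)
    (hK : AEStronglyMeasurable (Function.uncurry K) (μ.prod μ))
    (hK_nonpos : ∀ᵐ z ∂μ.prod μ, K z.1 z.2 ≤ 0)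
    (hint : Integrable (fun z : α × α => ‖f z.1‖ * |K z.1 z.2| * ‖f z.2‖) (μ.prod μ)) :
    ∫ x, ∫ y, ‖f x‖ * K x y * ‖f y‖ ∂μ ∂μ ≤
      (∫ x, ∫ y, starRingEnd ℂ (f x) * K x y * f y ∂μ ∂μ).re := by
  rw [re_integral_integral_conj_mul_kernel_mul hf hK hint,
    integral_integral (integrable_norm_mul_kernel_mul hf hK hint)]
  refine integral_mono_ae (integrable_norm_mul_kernel_mul hf hK hint)
    (integrable_conj_mul_kernel_mul hf hK hint).re ?_
  filter_upwards [hK_nonpos] with z hz using norm_mul_mul_norm_le_re_conj_mul_mul hz _ _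

theorem ae_ae_re_conj_mul_eq_of_integral_integral_eq (hf : AEStronglyMeasurable f μ)
    (hK : AEStronglyMeasurable (Function.uncurry K) (μ.prod μ))
    (hK_neg : ∀ᵐ z ∂μ.prod μ, K z.1 z.2 < 0)
    (hint : Integrable (fun z : α × α => ‖f z.1‖ * |K z.1 z.2| * ‖f z.2‖) (μ.prod μ))
    (heq : (∫ x, ∫ y, starRingEnd ℂ (f x) * K x y * f y ∂μ ∂μ).re =
      ∫ x, ∫ y, ‖f x‖ * K x y * ‖f y‖ ∂μ ∂μ) :
    ∀ᵐ x ∂μ, ∀ᵐ y ∂μ, (starRingEnd ℂ (f x) * f y).re = ‖f x‖ * ‖f y‖ := by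
  have hG := integrable_norm_mul_kernel_mul hf hK hint
  rw [re_integral_integral_conj_mul_kernel_mul hf hK hint, integral_integral hG, eq_comm] at heq
  have hle : ∀ᵐ z ∂μ.prod μ, ‖f z.1‖ * K z.1 z.2 * ‖f z.2‖ ≤
      (starRingEnd ℂ (f z.1) * K z.1 z.2 * f z.2).re := by
    filter_upwards [hK_neg] with z hz using norm_mul_mul_norm_le_re_conj_mul_mul hz.le _ _
  have hae :=
    (integral_eq_iff_of_ae_le hG (integrable_conj_mul_kernel_mul hf hK hint).re hle).mp heq
  refine Measure.ae_ae_of_ae_prod (p := fun z : α × α =>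
    (starRingEnd ℂ (f z.1) * f z.2).re = ‖f z.1‖ * ‖f z.2‖) ?_
  filter_upwards [hae, hK_neg] with z hz hKz
  rw [RCLike.re_to_complex, re_conj_mul_ofReal_mul, mul_right_comm, mul_comm] at hz
  exact (mul_left_cancel₀ hKz.ne hz).symm

end KernelQuadraticForm

/-- Strict positivity via a negative Fourier transform: for `α̂ ∈ L¹` and `V̂` continuous and
strictly negative, `∫∫ conj(α̂(p)) V̂(p−q) α̂(q) ≥ ∫∫ |α̂(p)| V̂(p−q) |α̂(q)|`, with equality
only if `α̂(p) = e^{iκ}|α̂(p)|` for some constant `κ` and a.e. `p`. -/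
theorem quadratic_form_lower_bound
    (a : EuclideanSpace ℝ (Fin 3) → ℂ) (Vh : EuclideanSpace ℝ (Fin 3) → ℝ)
    (ha : Integrable a volume) (hVcont : Continuous Vh) (hVneg : ∀ k, Vh k < 0)
    (habs : Integrable
      (fun z : EuclideanSpace ℝ (Fin 3) × EuclideanSpace ℝ (Fin 3) =>
        ‖a z.1‖ * |Vh (z.1 - z.2)| * ‖a z.2‖) volume) :
    ((∫ p : EuclideanSpace ℝ (Fin 3), ∫ q : EuclideanSpace ℝ (Fin 3),
        (starRingEnd ℂ) (a p) * (Vh (p - q) : ℂ) * a q).re ≥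
      ∫ p : EuclideanSpace ℝ (Fin 3), ∫ q : EuclideanSpace ℝ (Fin 3),
        ‖a p‖ * Vh (p - q) * ‖a q‖) ∧
    ((∫ p : EuclideanSpace ℝ (Fin 3), ∫ q : EuclideanSpace ℝ (Fin 3),
        (starRingEnd ℂ) (a p) * (Vh (p - q) : ℂ) * a q).re =
      (∫ p : EuclideanSpace ℝ (Fin 3), ∫ q : EuclideanSpace ℝ (Fin 3),
        ‖a p‖ * Vh (p - q) * ‖a q‖) →
      ∃ κ : ℝ, ∀ᵐ p ∂(volume : Measure (EuclideanSpace ℝ (Fin 3))),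
        a p = Complex.exp (κ * Complex.I) * (‖a p‖ : ℂ)) := by
  have hf := ha.aestronglyMeasurable
  have hK : AEStronglyMeasurable (Function.uncurry fun p q : EuclideanSpace ℝ (Fin 3) => Vh (p - q))
      (volume.prod volume) :=
    (hVcont.comp continuous_sub).aestronglyMeasurable
  have hint := Measure.volume_eq_prod (EuclideanSpace ℝ (Fin 3)) (EuclideanSpace ℝ (Fin 3)) ▸ habs
  refine ⟨integral_integral_norm_mul_kernel_mul_le hf hK (.of_forall fun _ => (hVneg _).le) hint,
    fun heq => exists_phase_of_ae_ae_re_conj_mul_eq ?_⟩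
  exact ae_ae_re_conj_mul_eq_of_integral_integral_eq hf hK (.of_forall fun _ => hVneg _) hint heq
end
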